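/- arXiv:1312.7876 — 4 statements merged into one kernel-verified Lean document; each statement's English description precedes it below -/
import Mathlib

section
/- Let A be a twice differentiable function of z with A' < 0 such that A'' - A'² < 0, and suppose W(φ_B) = 2(d-1)e^{-A}A' and φ_B' = √(-2(d-1)(A'' - A'²)). Then W ∂²_φ log W = -(1/2) e^{-A} ∂_z log(1 - A''/A'²). -/
/-!
Write `a = A'`, `b = A''`, `u = a² - b > 0` and `c = 2(d-1)`. Then `φ_B' = √c √u` and
`W'/W = b/a - a = -u/a`, so `∂_φ log W = W'/(W φ_B') = -g/√c` with `g = √u/a`. Hence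
`W ∂²_φ log W = c e^{-A} a · (-g'/√c)/(√c √u) = -e^{-A} g'/g`, and the logarithmic derivative
`g'/g` is `(log g)' = ½ (log (u/a²))' = ½ (log (1 - b/a²))'`, since `log` only sees `|g|`.
-/

open Real

lemma log_sqrt_div (u a : ℝ) (hu : 0 ≤ u) : log (√u / a) = log (u / a ^ 2) / 2 := by
  rw [← log_abs, abs_div, abs_of_nonneg (sqrt_nonneg u), ← sqrt_sq_eq_abs, ← sqrt_div hu,
    log_sqrt (div_nonneg hu (sq_nonneg a))]

lemma deriv_log_one_sub_div_sq {a b : ℝ → ℝ} {z : ℝ} (ha : ∀ t, a t ≠ 0)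
    (hab : ∀ t, b t < a t ^ 2) (hda : DifferentiableAt ℝ a z) (hdb : DifferentiableAt ℝ b z) :
    deriv (fun t => log (1 - b t / a t ^ 2)) z =
      2 * logDeriv (fun t => √(a t ^ 2 - b t) / a t) z := by
  have hlog : (fun t => log (1 - b t / a t ^ 2)) =
      fun t => 2 * log (√(a t ^ 2 - b t) / a t) := by
    funext t
    rw [log_sqrt_div _ _ (sub_pos.2 (hab t)).le, one_sub_div (pow_ne_zero 2 (ha t))]
    ring
  have hg : DifferentiableAt ℝ (fun t => √(a t ^ 2 - b t) / a t) z :=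
    (((hda.pow 2).sub hdb).sqrt (sub_pos.2 (hab z)).ne').div hda (ha z)
  have hgz : √(a z ^ 2 - b z) / a z ≠ 0 :=
    div_ne_zero (sqrt_pos.2 (sub_pos.2 (hab z))).ne' (ha z)
  rw [hlog, deriv_const_mul_field', ← deriv_log_comp_eq_logDeriv hg hgz]
  rfl

lemma logDeriv_const_mul_exp_neg_mul {A a : ℝ → ℝ} {c t : ℝ} (hc : c ≠ 0) (ha : a t ≠ 0)
    (hA : DifferentiableAt ℝ A t) (hda : DifferentiableAt ℝ a t) :
    logDeriv (fun t => c * exp (-A t) * a t) t = deriv a t / a t - deriv A t := by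
  have hderiv : HasDerivAt (fun t => c * exp (-A t) * a t)
      (c * (exp (-A t) * -deriv A t) * a t + c * exp (-A t) * deriv a t) t :=
    (hA.hasDerivAt.neg.exp.const_mul c).mul hda.hasDerivAt
  rw [logDeriv_apply, hderiv.deriv]
  field_simp
  ring

lemma logDeriv_const_mul_exp_neg_mul_deriv_div_sqrt {A : ℝ → ℝ} {c t : ℝ} (hc : 0 < c)
    (ha : deriv A t ≠ 0) (hab : deriv (deriv A) t < deriv A t ^ 2)
    (hA : DifferentiableAt ℝ A t) (hda : DifferentiableAt ℝ (deriv A) t) :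
    logDeriv (fun t => c * exp (-A t) * deriv A t) t /
        √(c * (deriv A t ^ 2 - deriv (deriv A) t)) =
      -(√(deriv A t ^ 2 - deriv (deriv A) t) / deriv A t) / √c := by
  have hu := sub_pos.2 hab
  have hs0 := (sqrt_pos.2 hu).ne'
  have hc0 := (sqrt_pos.2 hc).ne'
  rw [logDeriv_const_mul_exp_neg_mul hc.ne' ha hA hda, sqrt_mul hc.le]
  field_simp
  linear_combination sq_sqrt hu.le

/-- For a domain wall in conformal coordinates with `A' < 0` and `A'' - A'² < 0`,
with `W = 2(d-1)e^{-A}A'`, `φ_B' = √(-2(d-1)(A''-A'²))` and `∂_φ F = F'/φ_B'`,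
one has `W ∂²_φ log W = -(1/2) e^{-A} ∂_z log(1 - A''/A'²)`. -/
theorem W_ddphi_logW_identity (d : ℕ) (hd : 2 ≤ d)
    (A φB W : ℝ → ℝ)
    (hA : ContDiff ℝ 3 A)
    (hA' : ∀ z, deriv A z < 0)
    (hstrict : ∀ z, deriv (deriv A) z - (deriv A z) ^ 2 < 0)
    (hφB' : ∀ z, deriv φB z =
      Real.sqrt (-2 * ((d : ℝ) - 1) * (deriv (deriv A) z - (deriv A z) ^ 2)))
    (hW : ∀ z, W z = 2 * ((d : ℝ) - 1) * Real.exp (-(A z)) * deriv A z) :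
    ∀ z, W z *
        (deriv (fun t => deriv W t / (W t * deriv φB t)) z / deriv φB z) =
      -(1 / 2) * Real.exp (-(A z)) *
        deriv (fun t => Real.log (1 - deriv (deriv A) t / (deriv A t) ^ 2)) z := by
  intro z
  set c : ℝ := 2 * ((d : ℝ) - 1) with hc_def
  have hc : 0 < c := by linarith [show (2 : ℝ) ≤ d by exact_mod_cast hd]
  have hA1 : Differentiable ℝ A := hA.differentiable (by norm_num)
  have hA2 : ContDiff ℝ 2 (deriv A) := hA.deriv' (n := 2)
  have hda : Differentiable ℝ (deriv A) := hA2.differentiable two_ne_zero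
  have hdda : Differentiable ℝ (deriv (deriv A)) :=
    (hA2.deriv' (n := 1)).differentiable one_ne_zero
  have ha : ∀ t, deriv A t ≠ 0 := fun t => (hA' t).ne
  have hab : ∀ t, deriv (deriv A) t < deriv A t ^ 2 := fun t => by linarith [hstrict t]
  have hφ : ∀ t, deriv φB t = √(c * (deriv A t ^ 2 - deriv (deriv A) t)) := fun t => by
    rw [hφB' t, hc_def]
    ring_nf
  have hdφ_logW : (fun t => deriv W t / (W t * deriv φB t)) =
      fun t => -(√(deriv A t ^ 2 - deriv (deriv A) t) / deriv A t) / √c := funext fun t => by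
    rw [← div_div, ← logDeriv_apply, funext hW, hφ t,
      logDeriv_const_mul_exp_neg_mul_deriv_div_sqrt hc (ha t) (hab t) (hA1 t) (hda t)]
  rw [hdφ_logW, deriv_div_const, deriv.fun_neg,
    deriv_log_one_sub_div_sq ha hab (hda z) (hdda z), logDeriv_apply,
    hW z, hφ z, sqrt_mul hc.le]
  have hs0 := (sqrt_pos.2 (sub_pos.2 (hab z))).ne'
  have hc0 := (sqrt_pos.2 hc).ne'
  have ha0 := ha z
  field_simp
  rw [sq_sqrt hc.le]
  ring
end

section
/- For A(z) = c log(z₀ - z) with c > 0 as z → z₀⁻, the ansatz E(z) = E₀ (z₀ - z) e^{-A(z)} with E₀ = p²/((d-1)c + 1) solves the Riccati equation E' - e^A E² + dA'E + p² e^{-A} = 0 to leading order as z → z₀, and the integral ∫^{z₀} e^{A(z)} E(z) dz = ∫^{z₀} E₀ (z₀-z) dz is finite, so the corresponding fluctuation is IR-regular. -/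
/-!
With `A' = -c/(z₀ - z)` the ansatz has `E' = (c - 1) E₀ e^{-A}`, so the terms of the Riccati
equation that are linear in `E₀` add up to `(p² - E₀((d - 1)c + 1)) e^{-A} = 0`. Only the quadratic
term survives, `-E₀² (z₀ - z)² e^{-A}`, and after multiplication by `(z₀ - z)^c = e^A` it vanishes
like `(z₀ - z)²`. Likewise `e^A E = E₀ (z₀ - z)` is continuous up to `z₀`, hence integrable.
-/

open Filter Topology Real

noncomputable def riccatiResidual (d p2 : ℝ) (A E : ℝ → ℝ) (z : ℝ) : ℝ :=
  deriv E z - exp (A z) * E z ^ 2 + d * deriv A z * E z + p2 * exp (-A z)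

lemma hasDerivAt_const_mul_log_sub {z z₀ : ℝ} (c : ℝ) (hz : z < z₀) :
    HasDerivAt (fun w => c * log (z₀ - w)) (-c / (z₀ - z)) z := by
  have hsub : HasDerivAt (fun w : ℝ => z₀ - w) (-1) z := by
    simpa using (hasDerivAt_id z).const_sub z₀
  exact ((hsub.log (sub_pos.2 hz).ne').const_mul c).congr_deriv (by ring)

lemma hasDerivAt_mul_sub_mul_exp_neg {A : ℝ → ℝ} {a z : ℝ} (E₀ z₀ : ℝ)
    (hA : HasDerivAt A a z) :
    HasDerivAt (fun w => E₀ * (z₀ - w) * exp (-A w))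
      (-E₀ * (1 + (z₀ - z) * a) * exp (-A z)) z := by
  have hsub : HasDerivAt (fun w : ℝ => E₀ * (z₀ - w)) (-E₀) z := by
    simpa using ((hasDerivAt_id z).const_sub z₀).const_mul E₀
  exact (hsub.mul hA.neg.exp).congr_deriv (by simp only [Pi.neg_apply]; ring)

lemma riccatiResidual_eq_of_log_ansatz {d c p2 E₀ z₀ z : ℝ} {A E : ℝ → ℝ} (hz : z < z₀)
    (hA : ∀ᶠ w in 𝓝 z, A w = c * log (z₀ - w))
    (hE : ∀ᶠ w in 𝓝 z, E w = E₀ * (z₀ - w) * exp (-A w))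
    (hE₀ : E₀ * ((d - 1) * c + 1) = p2) :
    riccatiResidual d p2 A E z = -(E₀ * (z₀ - z)) ^ 2 * exp (-A z) := by
  have hA' : HasDerivAt A (-c / (z₀ - z)) z :=
    (hasDerivAt_const_mul_log_sub c hz).congr_of_eventuallyEq hA
  have hcancel : (z₀ - z) * (-c / (z₀ - z)) = -c := mul_div_cancel₀ _ (sub_pos.2 hz).ne'
  have hE' : HasDerivAt E (-E₀ * (1 - c) * exp (-A z)) z := by
    refine ((hasDerivAt_mul_sub_mul_exp_neg E₀ z₀ hA').congr_of_eventuallyEq hE).congr_deriv ?_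
    rw [hcancel, sub_eq_add_neg]
  have hexp : exp (A z) * exp (-A z) = 1 := by rw [← exp_add, add_neg_cancel, exp_zero]
  rw [riccatiResidual, hE'.deriv, hA'.deriv, hE.self_of_nhds, ← hE₀]
  linear_combination (-(E₀ ^ 2 * (z₀ - z) ^ 2 * exp (-A z))) * hexp
    + (d * E₀ * exp (-A z)) * hcancel

lemma tendsto_rpow_mul_riccatiResidual {d c p2 E₀ z₀ : ℝ} {A E : ℝ → ℝ}
    (hA : ∀ z < z₀, A z = c * log (z₀ - z))
    (hE : ∀ z < z₀, E z = E₀ * (z₀ - z) * exp (-A z))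
    (hE₀ : E₀ * ((d - 1) * c + 1) = p2) :
    Tendsto (fun z => (z₀ - z) ^ c * riccatiResidual d p2 A E z) (𝓝[<] z₀) (𝓝 0) := by
  have hlim : Tendsto (fun z => -(E₀ * (z₀ - z)) ^ 2) (𝓝[<] z₀) (𝓝 0) := by
    have hcont : Continuous fun z : ℝ => -(E₀ * (z₀ - z)) ^ 2 := by fun_prop
    simpa using (hcont.tendsto z₀).mono_left nhdsWithin_le_nhds
  refine hlim.congr' ?_
  filter_upwards [self_mem_nhdsWithin] with z (hz : z < z₀)
  have hnear : ∀ᶠ w in 𝓝 z, w < z₀ := Iio_mem_nhds hz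
  rw [riccatiResidual_eq_of_log_ansatz hz (hnear.mono hA) (hnear.mono hE) hE₀, hA z hz,
    rpow_def_of_pos (sub_pos.2 hz), mul_comm (log _), ← mul_assoc, mul_comm _ (-_),
    mul_assoc, ← exp_add, add_neg_cancel, exp_zero, mul_one]

lemma integrableOn_exp_mul_ansatz {A E : ℝ → ℝ} {E₀ z₀ : ℝ} (z₁ : ℝ)
    (hE : ∀ z < z₀, E z = E₀ * (z₀ - z) * exp (-A z)) :
    MeasureTheory.IntegrableOn (fun z => exp (A z) * E z) (Set.Ioo z₁ z₀) := by
  have hlin : MeasureTheory.IntegrableOn (fun z => E₀ * (z₀ - z)) (Set.Ioo z₁ z₀) :=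
    (by fun_prop : Continuous fun z : ℝ => E₀ * (z₀ - z)).integrableOn_Icc.mono_set
      Set.Ioo_subset_Icc_self
  refine hlin.congr_fun (fun z hz => ?_) measurableSet_Ioo
  rw [hE z hz.2, mul_left_comm, ← exp_add, add_neg_cancel, exp_zero, mul_one]

theorem IR_finite_endpoint_regularity_general (d : ℕ) (hd : 2 ≤ d) (c p2 z₀ z₁ : ℝ)
    (hc : 0 < c)
    (A E : ℝ → ℝ)
    (hA : ∀ z < z₀, A z = c * Real.log (z₀ - z))
    (hE : ∀ z < z₀, E z = (p2 / (((d : ℝ) - 1) * c + 1)) * (z₀ - z) * Real.exp (-(A z))) :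
    Tendsto (fun z => (z₀ - z) ^ c *
        (deriv E z - Real.exp (A z) * (E z) ^ 2 + (d : ℝ) * deriv A z * E z +
          p2 * Real.exp (-(A z))))
      (nhdsWithin z₀ (Set.Iio z₀)) (𝓝 0) ∧
    MeasureTheory.IntegrableOn (fun z => Real.exp (A z) * E z) (Set.Ioo z₁ z₀) := by
  have hd' : (2 : ℝ) ≤ d := by exact_mod_cast hd
  have hD : ((d : ℝ) - 1) * c + 1 ≠ 0 := by nlinarith
  exact ⟨tendsto_rpow_mul_riccatiResidual hA hE (div_mul_cancel₀ p2 hD),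
    integrableOn_exp_mul_ansatz z₁ hE⟩

/-- IR geometry `A(z) = c log(z₀ - z)` with `c > 0`, `z → z₀⁻`: the ansatz
`E = E₀ (z₀ - z) e^{-A}` with `E₀ = p²/((d-1)c + 1)` solves the Riccati
equation `E' - e^A E² + dA'E + p² e^{-A} = 0` to leading order as `z → z₀⁻`,
and `∫^{z₀} e^A E dz = ∫^{z₀} E₀ (z₀ - z) dz` is finite, so the corresponding
fluctuation is IR-regular. -/
theorem IR_finite_endpoint_regularity (d : ℕ) (hd : 2 ≤ d) (c p2 z₀ z₁ : ℝ)
    (hc : 0 < c) (hp : 0 < p2) (hz : z₁ < z₀)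
    (A E : ℝ → ℝ)
    (hA : ∀ z < z₀, A z = c * Real.log (z₀ - z))
    (hE : ∀ z < z₀, E z = (p2 / (((d : ℝ) - 1) * c + 1)) * (z₀ - z) * Real.exp (-(A z))) :
    Tendsto (fun z => (z₀ - z) ^ c *
        (deriv E z - Real.exp (A z) * (E z) ^ 2 + (d : ℝ) * deriv A z * E z +
          p2 * Real.exp (-(A z))))
      (nhdsWithin z₀ (Set.Iio z₀)) (𝓝 0) ∧
    MeasureTheory.IntegrableOn (fun z => Real.exp (A z) * E z) (Set.Ioo z₁ z₀) :=
  IR_finite_endpoint_regularity_general d hd c p2 z₀ z₁ hc A E hA hE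
end

section
/- Let k > 0, p > 0, d ≥ 2, and define F(z) = -d/2 - p z (K_k'(pz) + c I_k'(pz))/(K_k(pz) + c I_k(pz)) for a constant c, where K_k, I_k are modified Bessel functions and primes denote derivatives with respect to the argument pz. Then F satisfies the Riccati equation z F' - F² - d F + p² z² + m² = 0 with m² = k² - d²/4 (equivalently m²L² = Δ(d-Δ) with k = Δ - d/2, L = 1), on any interval where the denominator is nonvanishing. -/
/-!
With `f = K + c I`, which again solves the modified Bessel equation, put
`w(x) = x f'(x)/f(x)`. The Bessel equation is equivalent to the scale-free Riccati equation
`x w' = x² + k² - w²`, and `F(z) = -d/2 - w(pz)` turns it into the stated one, since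
`z F'(z) = -(pz) w'(pz)` and `F² + dF = w(pz)² - d²/4`.
-/

def ModifiedBesselEqAt (k : ℝ) (f : ℝ → ℝ) (x : ℝ) : Prop :=
  x ^ 2 * deriv (deriv f) x + x * deriv f x - (x ^ 2 + k ^ 2) * f x = 0

theorem deriv_add_const_mul_eq {f g : ℝ → ℝ} (c : ℝ)
    (hf : Differentiable ℝ f) (hg : Differentiable ℝ g) :
    deriv (fun y => f y + c * g y) = fun y => deriv f y + c * deriv g y := by
  funext y
  exact ((hf y).hasDerivAt.add ((hg y).hasDerivAt.const_mul c)).deriv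

theorem ModifiedBesselEqAt.add_const_mul {k x : ℝ} {f g : ℝ → ℝ} (c : ℝ)
    (hf : Differentiable ℝ f) (hg : Differentiable ℝ g)
    (hf' : DifferentiableAt ℝ (deriv f) x) (hg' : DifferentiableAt ℝ (deriv g) x)
    (hfx : ModifiedBesselEqAt k f x) (hgx : ModifiedBesselEqAt k g x) :
    ModifiedBesselEqAt k (fun y => f y + c * g y) x := by
  have hderiv := deriv_add_const_mul_eq c hf hg
  have hderiv2 : deriv (deriv (fun y => f y + c * g y)) x =
      deriv (deriv f) x + c * deriv (deriv g) x := by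
    rw [hderiv]
    exact (hf'.hasDerivAt.add (hg'.hasDerivAt.const_mul c)).deriv
  unfold ModifiedBesselEqAt at *
  rw [hderiv2, hderiv]
  linear_combination hfx + c * hgx

theorem hasDerivAt_mul_logDeriv {f : ℝ → ℝ} {x : ℝ}
    (hf : DifferentiableAt ℝ f x) (hf' : DifferentiableAt ℝ (deriv f) x) (hfx : f x ≠ 0) :
    HasDerivAt (fun y => y * logDeriv f y)
      (logDeriv f x + x * (deriv (deriv f) x / f x - logDeriv f x ^ 2)) x := by
  have hlog : HasDerivAt (logDeriv f) (deriv (deriv f) x / f x - logDeriv f x ^ 2) x :=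
    (hf'.hasDerivAt.div hf.hasDerivAt hfx).congr_deriv (by rw [logDeriv_apply]; field_simp)
  simpa using (hasDerivAt_id' x).fun_mul hlog

theorem ModifiedBesselEqAt.riccati_mul_logDeriv {k x : ℝ} {f : ℝ → ℝ}
    (hfx : f x ≠ 0) (hbessel : ModifiedBesselEqAt k f x) :
    x * (logDeriv f x + x * (deriv (deriv f) x / f x - logDeriv f x ^ 2)) =
      x ^ 2 + k ^ 2 - (x * logDeriv f x) ^ 2 := by
  unfold ModifiedBesselEqAt at hbessel
  rw [logDeriv_apply]
  field_simp
  linear_combination f x * hbessel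

theorem riccati_AdS_of_riccati {w : ℝ → ℝ} {w' d k p z : ℝ} (hw : HasDerivAt w w' (p * z))
    (hriccati : p * z * w' = (p * z) ^ 2 + k ^ 2 - w (p * z) ^ 2) :
    z * deriv (fun z => -d / 2 - w (p * z)) z - (-d / 2 - w (p * z)) ^ 2
      - d * (-d / 2 - w (p * z)) + p ^ 2 * z ^ 2 + (k ^ 2 - d ^ 2 / 4) = 0 := by
  have hF : HasDerivAt (fun z => -d / 2 - w (p * z)) (-(w' * p)) z := by
    simpa using (hw.comp z ((hasDerivAt_id z).const_mul p)).const_sub (-d / 2)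
  rw [hF.deriv]
  linear_combination -hriccati

theorem bessel_riccati_AdS_general (d : ℕ) (k p c : ℝ)
    (hp : 0 < p)
    (K I : ℝ → ℝ) (hK : ContDiff ℝ 2 K) (hI : ContDiff ℝ 2 I)
    (hKode : ∀ x > (0:ℝ),
      x ^ 2 * deriv (deriv K) x + x * deriv K x - (x ^ 2 + k ^ 2) * K x = 0)
    (hIode : ∀ x > (0:ℝ),
      x ^ 2 * deriv (deriv I) x + x * deriv I x - (x ^ 2 + k ^ 2) * I x = 0)
    (S : Set ℝ) (hSpos : ∀ z ∈ S, 0 < z)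
    (hden : ∀ z ∈ S, K (p * z) + c * I (p * z) ≠ 0)
    (F : ℝ → ℝ)
    (hF : ∀ z, F z = -(d : ℝ) / 2 -
      p * z * (deriv K (p * z) + c * deriv I (p * z)) / (K (p * z) + c * I (p * z))) :
    ∀ z ∈ S, z * deriv F z - (F z) ^ 2 - (d : ℝ) * F z + p ^ 2 * z ^ 2 +
      (k ^ 2 - (d : ℝ) ^ 2 / 4) = 0 := by
  intro z hz
  set f : ℝ → ℝ := fun x => K x + c * I x
  have hK1 := hK.differentiable two_ne_zero
  have hI1 := hI.differentiable two_ne_zero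
  have hf2 : ContDiff ℝ 2 f := hK.add (contDiff_const.mul hI)
  have hFw : F = fun z => -(d : ℝ) / 2 - p * z * logDeriv f (p * z) := by
    funext z
    rw [hF, logDeriv_apply, deriv_add_const_mul_eq c hK1 hI1, mul_div_assoc]
  have hx : 0 < p * z := mul_pos hp (hSpos z hz)
  have hbessel : ModifiedBesselEqAt k f (p * z) :=
    .add_const_mul c hK1 hI1 (hK.differentiable_deriv_two _) (hI.differentiable_deriv_two _)
      (hKode _ hx) (hIode _ hx)
  rw [hFw]
  exact riccati_AdS_of_riccati (w := fun x => x * logDeriv f x)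
    (hasDerivAt_mul_logDeriv (hf2.differentiable two_ne_zero _)
      (hf2.differentiable_deriv_two _) (hden z hz))
    (hbessel.riccati_mul_logDeriv (hden z hz))

/-- The function `F(z) = -d/2 - pz (K_k'(pz) + c I_k'(pz))/(K_k(pz) + c I_k(pz))`
built from modified Bessel functions of order `k` (characterized here by the
modified Bessel equation `x²f'' + xf' - (x² + k²)f = 0`) satisfies the Riccati
equation `z F' - F² - dF + p²z² + m² = 0` with `m² = k² - d²/4`, on any set
where the denominator is nonvanishing. -/
theorem bessel_riccati_AdS (d : ℕ) (hd : 2 ≤ d) (k p c : ℝ)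
    (hk : 0 < k) (hp : 0 < p)
    (K I : ℝ → ℝ) (hK : ContDiff ℝ 2 K) (hI : ContDiff ℝ 2 I)
    (hKode : ∀ x > (0:ℝ),
      x ^ 2 * deriv (deriv K) x + x * deriv K x - (x ^ 2 + k ^ 2) * K x = 0)
    (hIode : ∀ x > (0:ℝ),
      x ^ 2 * deriv (deriv I) x + x * deriv I x - (x ^ 2 + k ^ 2) * I x = 0)
    (S : Set ℝ) (hS : IsOpen S) (hSpos : ∀ z ∈ S, 0 < z)
    (hden : ∀ z ∈ S, K (p * z) + c * I (p * z) ≠ 0)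
    (F : ℝ → ℝ)
    (hF : ∀ z, F z = -(d : ℝ) / 2 -
      p * z * (deriv K (p * z) + c * deriv I (p * z)) / (K (p * z) + c * I (p * z))) :
    ∀ z ∈ S, z * deriv F z - (F z) ^ 2 - (d : ℝ) * F z + p ^ 2 * z ^ 2 +
      (k ^ 2 - (d : ℝ) ^ 2 / 4) = 0 :=
  bessel_riccati_AdS_general d k p c hp K I hK hI hKode hIode S hSpos hden F hF
end

section
/- For the warp factor A(z) = (2/(d-1)) log(1 - Λ^d z^d) + log(L/z), the potential V = -(d-1)e^{-2A}(A'' + (d-1)A'²) equals -(d/L²)(1 - Λ^d z^d)^{-2(d+1)/(d-1)} (d-1 + (d+1) Λ^{2d} z^{2d}). -/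
/-!
With `c = 2/(d-1)` and `t = Λ^d z^d`, the warp factor is `A = c log (1 - t) + log (L/z)`, so
`e^{-2A} = (1 - t)^{-2c} (z/L)²`, while `z A' = -(c d t/(1 - t) + 1)` and `z² A''` are
rational in `t`. Since `c (d - 1) = 2`, one finds
`(d - 1) z² (A'' + (d - 1) A'²) = d (1 - t)⁻² (d - 1 + (d + 1) t²)`,
and `(1 - t)^{-2c} (1 - t)⁻²` is the power `-2(d + 1)/(d - 1)` of `1 - t`.
-/

open Real Set Filter Topology

noncomputable section

variable (c a : ℝ) (n : ℕ) (L : ℝ)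

def warpFactor (w : ℝ) : ℝ := c * log (1 - a * w ^ n) + log (L / w)

def warpFactorDeriv (w : ℝ) : ℝ := -(c * n * (a * w ^ n / (1 - a * w ^ n)) + 1) / w

lemma hasDerivAt_pow_of_ne_zero {x : ℝ} (hx : x ≠ 0) : HasDerivAt (· ^ n) (n * x ^ n / x) x := by
  refine (hasDerivAt_pow n x).congr_deriv ?_
  rcases n with _ | n
  · simp
  · rw [pow_succ]; field_simp; simp

variable {c a L n}

lemma hasDerivAt_one_sub_mul_pow {w : ℝ} (hw : w ≠ 0) :
    HasDerivAt (fun y ↦ 1 - a * y ^ n) (-(n * (a * w ^ n)) / w) w := by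
  refine (((hasDerivAt_pow_of_ne_zero n hw).const_mul a).const_sub 1).congr_deriv ?_
  ring

lemma hasDerivAt_warpFactor (hL : L ≠ 0) {w : ℝ} (hw : w ≠ 0) (hu : 1 - a * w ^ n ≠ 0) :
    HasDerivAt (warpFactor c a n L) (warpFactorDeriv c a n w) w := by
  have hlog := ((hasDerivAt_one_sub_mul_pow hw).log hu).const_mul c
  have hquot := ((hasDerivAt_const w L).fun_div (hasDerivAt_id' w) hw).log (div_ne_zero hL hw)
  refine (hlog.add hquot).congr_deriv ?_
  unfold warpFactorDeriv
  field_simp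
  ring

lemma hasDerivAt_warpFactorDeriv {w : ℝ} (hw : w ≠ 0) (hu : 1 - a * w ^ n ≠ 0) :
    HasDerivAt (warpFactorDeriv c a n)
      ((c * n * (a * w ^ n / (1 - a * w ^ n)) + 1
        - c * n ^ 2 * (a * w ^ n / (1 - a * w ^ n)) / (1 - a * w ^ n)) / w ^ 2) w := by
  have hq := ((hasDerivAt_pow_of_ne_zero n hw).const_mul a).fun_div
    (hasDerivAt_one_sub_mul_pow hw) hu
  have hF := (((hq.const_mul (c * n)).add_const 1).fun_neg).fun_div (hasDerivAt_id' w) hw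
  refine hF.congr_deriv ?_
  field_simp
  ring

lemma deriv_deriv_warpFactor (hL : L ≠ 0) {w : ℝ} (hw : w ≠ 0) (hu : 1 - a * w ^ n ≠ 0) :
    deriv (deriv (warpFactor c a n L)) w =
      (c * n * (a * w ^ n / (1 - a * w ^ n)) + 1
        - c * n ^ 2 * (a * w ^ n / (1 - a * w ^ n)) / (1 - a * w ^ n)) / w ^ 2 := by
  have hcont : Continuous fun y : ℝ ↦ 1 - a * y ^ n := by fun_prop
  have hderiv : deriv (warpFactor c a n L) =ᶠ[𝓝 w] warpFactorDeriv c a n := by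
    filter_upwards [eventually_ne_nhds hw, hcont.continuousAt.eventually_ne hu] with y hy hy'
    exact (hasDerivAt_warpFactor hL hy hy').deriv
  rw [hderiv.deriv_eq, (hasDerivAt_warpFactorDeriv hw hu).deriv]

lemma exp_neg_two_mul_warpFactor (hL : L ≠ 0) {w : ℝ} (hw : w ≠ 0) (hu : 0 < 1 - a * w ^ n) :
    exp (-(2 * warpFactor c a n L w)) = (1 - a * w ^ n) ^ (-2 * c) * (w / L) ^ 2 := by
  rw [rpow_def_of_pos hu, ← exp_log (by positivity : 0 < (w / L) ^ 2), ← exp_add,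
    log_pow, ← inv_div, log_inv, warpFactor]
  push_cast
  congr 1
  ring

lemma one_sub_mul_pow_pos {Λ z : ℝ} (hΛ : 0 < Λ) (hz : z ∈ Ioo 0 Λ⁻¹) {n : ℕ} (hn : n ≠ 0) :
    0 < 1 - Λ ^ n * z ^ n := by
  have hΛz : Λ * z < 1 := by
    simpa [mul_inv_cancel₀ hΛ.ne'] using mul_lt_mul_of_pos_left hz.2 hΛ
  have := pow_lt_one₀ (mul_nonneg hΛ.le hz.1.le) hΛz hn
  rw [mul_pow] at this
  linarith

end

/-- Toy confinement model: for the warp factor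
`A(z) = (2/(d-1)) log(1 - Λ^d z^d) + log(L/z)` on `0 < z < Λ⁻¹`, the potential
`V = -(d-1)e^{-2A}(A'' + (d-1)A'²)` equals
`-(d/L²)(1 - Λ^d z^d)^{-2(d+1)/(d-1)} (d-1 + (d+1) Λ^{2d} z^{2d})`. -/
theorem toy_confinement_potential (d : ℕ) (hd : 2 ≤ d) (L Λ : ℝ)
    (hL : 0 < L) (hΛ : 0 < Λ) (A : ℝ → ℝ)
    (hA : ∀ z ∈ Set.Ioo (0:ℝ) Λ⁻¹,
      A z = 2 / ((d : ℝ) - 1) * Real.log (1 - Λ ^ d * z ^ d) + Real.log (L / z)) :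
    ∀ z ∈ Set.Ioo (0:ℝ) Λ⁻¹,
      -((d : ℝ) - 1) * Real.exp (-(2 * A z)) *
          (deriv (deriv A) z + ((d : ℝ) - 1) * (deriv A z) ^ 2) =
        -((d : ℝ) / L ^ 2) *
          (1 - Λ ^ d * z ^ d) ^ (-(2 * ((d : ℝ) + 1) / ((d : ℝ) - 1))) *
          ((d : ℝ) - 1 + ((d : ℝ) + 1) * Λ ^ (2 * d) * z ^ (2 * d)) := by
  intro z hz
  have hd1 : (d : ℝ) - 1 ≠ 0 := by
    have : (2 : ℝ) ≤ d := by exact_mod_cast hd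
    linarith
  have hu := one_sub_mul_pow_pos hΛ hz (by omega : d ≠ 0)
  have hA_eq : A =ᶠ[𝓝 z] warpFactor (2 / ((d : ℝ) - 1)) (Λ ^ d) d L :=
    eventuallyEq_of_mem (isOpen_Ioo.mem_nhds hz) hA
  rw [hA_eq.eq_of_nhds, hA_eq.deriv_eq, hA_eq.deriv.deriv_eq,
    (hasDerivAt_warpFactor hL.ne' hz.1.ne' hu.ne').deriv,
    deriv_deriv_warpFactor hL.ne' hz.1.ne' hu.ne', exp_neg_two_mul_warpFactor hL.ne' hz.1.ne' hu]
  have hexponent : -(2 * ((d : ℝ) + 1) / ((d : ℝ) - 1)) = -2 * (2 / ((d : ℝ) - 1)) + -2 := by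
    field_simp; ring
  rw [hexponent, rpow_add hu, rpow_neg hu.le, rpow_two, warpFactorDeriv]
  have hz0 := hz.1.ne'
  field_simp
  ring
end
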